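/- The contravariant form takes the following values on the vectors v_{i,j}: S^{(a)}(v_{i,j}, v_{k,ℓ}) = 0 when i, j, k, ℓ are pairwise distinct; S^{(a)}(v_{i,j}, v_{i,k}) = −a_i a_j a_k/|a| when i, j, k are pairwise distinct; and S^{(a)}(v_{i,j}, v_{i,j}) = a_i a_j − a_i a_j (a_i + a_j)/|a| = −Σ_{k ≠ j} S^{(a)}(v_{i,j}, v_{i,k}) for i ≠ j. -/

import Mathlib

/-!
Write `u_k = ∑_m F_{k,m}`, so that `v_{i,j} = F_{i,j} - (a_j/|a|) u_i + (a_i/|a|) u_j`. For an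
antisymmetric `x` one has `S(x, F_{k,l}) = a_k a_l x_{k,l}`, hence `S(x, u_k) = a_k ∑_m a_m x_{k,m}`.
The weighted row sums `∑_m a_m (v_{i,j})_{k,m}` all vanish, so every `v_{i,j}` is orthogonal to
every `u_k` and `S(v_{i,j}, v_{k,l}) = S(v_{i,j}, F_{k,l}) = a_k a_l (v_{i,j})_{k,l}`. The three
values are then read off the coordinates of `v_{i,j}`, and summing over `k` gives
`∑_k S(v_{i,j}, v_{i,k}) = a_i ∑_k a_k (v_{i,j})_{i,k} = 0`.
-/

open Finset

/-- `d_{i,j} = b_i^1 b_j^2 − b_i^2 b_j^1`. -/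
def dd2 {n : ℕ} (b : Fin n → Fin 2 → ℂ) (i j : Fin n) : ℂ :=
  b i 0 * b j 1 - b i 1 * b j 0

/-- `f_{i,j,k}(z) = d_{j,k} z_i + d_{k,i} z_j + d_{i,j} z_k`. -/
def ff2 {n : ℕ} (b : Fin n → Fin 2 → ℂ) (z : Fin n → ℂ) (i j k : Fin n) : ℂ :=
  dd2 b j k * z i + dd2 b k i * z j + dd2 b i j * z k

/-- The basis vector `F_{i,j}` of `V` in the coordinate model: an element of
`Fin n → Fin n → ℂ` whose `(i,j)` entry is `1` and `(j,i)` entry is `-1`.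
This realizes the relations `F_{j,i} = -F_{i,j}` and `F_{i,i} = 0`. -/
def F2 (n : ℕ) (i j : Fin n) : Fin n → Fin n → ℂ :=
  fun k l => (if k = i ∧ l = j then 1 else 0) - (if k = j ∧ l = i then 1 else 0)

/-- The space `V` spanned by the `F_{i,j}`: antisymmetric coefficient arrays. -/
noncomputable def skewV2 (n : ℕ) : Submodule ℂ (Fin n → Fin n → ℂ) where
  carrier := {x | ∀ i j, x j i = -x i j}
  add_mem' := by
    intro x y hx hy i j
    simp only [Pi.add_apply, hx i j, hy i j]
    ring
  zero_mem' := by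
    intro i j
    simp
  smul_mem' := by
    intro c x hx i j
    simp only [Pi.smul_apply, smul_eq_mul, hx i j]
    ring

/-- The subspace `Sing V ⊆ V` of singular vectors:
`{∑_{i<j} c_{i,j} F_{i,j} : ∑_{j<i} a_j c_{j,i} − ∑_{j>i} a_j c_{i,j} = 0 for every i}`. -/
noncomputable def singV2 (n : ℕ) (a : Fin n → ℂ) : Submodule ℂ (Fin n → Fin n → ℂ) where
  carrier := {x | (∀ i j, x j i = -x i j) ∧ ∀ i,
    (∑ j ∈ Finset.univ.filter (fun j => j < i), a j * x j i) -
      (∑ j ∈ Finset.univ.filter (fun j => i < j), a j * x i j) = 0}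
  add_mem' := by
    intro x y hx hy
    refine ⟨fun i j => ?_, fun i => ?_⟩
    · simp only [Pi.add_apply, hx.1 i j, hy.1 i j]; ring
    · have h1 := hx.2 i
      have h2 := hy.2 i
      simp only [Pi.add_apply, mul_add, Finset.sum_add_distrib]
      linear_combination h1 + h2
  zero_mem' := by
    constructor
    · intro i j; simp
    · intro i; simp
  smul_mem' := by
    intro c x hx
    refine ⟨fun i j => ?_, fun i => ?_⟩
    · simp only [Pi.smul_apply, smul_eq_mul, hx.1 i j]; ring
    · have h := hx.2 i
      simp only [Pi.smul_apply, smul_eq_mul]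
      have e1 : ∑ j ∈ Finset.univ.filter (fun j => j < i), a j * (c * x j i) =
          c * ∑ j ∈ Finset.univ.filter (fun j => j < i), a j * x j i := by
        rw [Finset.mul_sum]; exact Finset.sum_congr rfl fun j _ => by ring
      have e2 : ∑ j ∈ Finset.univ.filter (fun j => i < j), a j * (c * x i j) =
          c * ∑ j ∈ Finset.univ.filter (fun j => i < j), a j * x i j := by
        rw [Finset.mul_sum]; exact Finset.sum_congr rfl fun j _ => by ring
      rw [e1, e2]
      linear_combination c * h

/-- The vector `v_{i,j} = F_{i,j} − (a_j/|a|) ∑_k F_{i,k} − (a_i/|a|) ∑_ℓ F_{ℓ,j}`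
(for `i ≠ j`), and `v_{i,i} = 0`. -/
noncomputable def vv2 {n : ℕ} (a : Fin n → ℂ) (i j : Fin n) : Fin n → Fin n → ℂ :=
  if i = j then 0 else
    F2 n i j - (a j / ∑ m, a m) • (∑ k, F2 n i k) - (a i / ∑ m, a m) • (∑ l, F2 n l j)

/-- The contravariant form `S^{(a)}` with `S^{(a)}(F_{i,j}, F_{i,j}) = a_i a_j` for `i < j`
and distinct basis vectors orthogonal, written on coordinates. -/
noncomputable def S2 {n : ℕ} (a : Fin n → ℂ) (x y : Fin n → Fin n → ℂ) : ℂ :=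
  ∑ i, ∑ j ∈ Finset.univ.filter (fun j => i < j), a i * a j * x i j * y i j

/-- The operator `L_{i,j,k}` sending each of `F_{i,j}, F_{j,k}, F_{k,i}` to
`a_k F_{i,j} + a_i F_{j,k} + a_j F_{k,i}` and killing `F_{ℓ,m}` with `{ℓ,m} ⊄ {i,j,k}`. -/
noncomputable def L2 {n : ℕ} (a : Fin n → ℂ) (i j k : Fin n) :
    (Fin n → Fin n → ℂ) →ₗ[ℂ] (Fin n → Fin n → ℂ) where
  toFun x := (x i j + x j k + x k i) •
    (a k • F2 n i j + a i • F2 n j k + a j • F2 n k i)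
  map_add' x y := by
    simp only [Pi.add_apply]
    rw [← add_smul]
    congr 1
    ring
  map_smul' c x := by
    simp only [Pi.smul_apply, smul_eq_mul, RingHom.id_apply]
    rw [smul_smul]
    congr 1
    ring

/-- The operator `K_i(z) = ∑_{{j,k} ⊆ {1,…,n}∖{i}} (d_{j,k}/f_{i,j,k}(z)) L_{i,j,k}`,
the sum over unordered pairs `{j,k}` realized by `j < k`. -/
noncomputable def K2 {n : ℕ} (a : Fin n → ℂ) (b : Fin n → Fin 2 → ℂ) (z : Fin n → ℂ)
    (i : Fin n) : (Fin n → Fin n → ℂ) →ₗ[ℂ] (Fin n → Fin n → ℂ) :=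
  ∑ j ∈ Finset.univ.erase i, ∑ k ∈ Finset.univ.filter (fun k => j < k ∧ k ≠ i),
    (dd2 b j k / ff2 b z i j k) • L2 a i j k

section ContravariantForm

variable {n : ℕ} (a : Fin n → ℂ)

theorem F2_swap (i j : Fin n) : F2 n j i = -F2 n i j := by
  funext p q
  simp only [F2, Pi.neg_apply]
  ring

theorem F2_mem_skewV2 (i j : Fin n) : F2 n i j ∈ skewV2 n := fun p q => by
  simp only [F2, and_comm]
  ring

theorem sum_F2_swap (j : Fin n) : ∑ l, F2 n l j = -∑ k, F2 n j k := by
  rw [← Finset.sum_neg_distrib]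
  exact Finset.sum_congr rfl fun l _ => F2_swap j l

theorem sum_F2_apply (i p q : Fin n) :
    (∑ k, F2 n i k) p q = (if p = i then 1 else 0) - (if q = i then 1 else 0) := by
  simp [F2, Finset.sum_apply, ite_and, Finset.sum_sub_distrib, eq_comm]

theorem sum_mul_F2_apply (i j k : Fin n) :
    ∑ m, a m * F2 n i j k m = (if k = i then a j else 0) - (if k = j then a i else 0) := by
  simp [F2, mul_sub, ite_and, Finset.sum_sub_distrib]

theorem vv2_self (i : Fin n) : vv2 a i i = 0 := if_pos rfl

theorem vv2_eq_of_ne {i j : Fin n} (hij : i ≠ j) :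
    vv2 a i j = F2 n i j - (a j / ∑ m, a m) • ∑ k, F2 n i k
      + (a i / ∑ m, a m) • ∑ k, F2 n j k := by
  rw [vv2, if_neg hij, sum_F2_swap, smul_neg, sub_neg_eq_add]

theorem vv2_mem_skewV2 (i j : Fin n) : vv2 a i j ∈ skewV2 n := by
  by_cases hij : i = j
  · simp only [vv2, if_pos hij, zero_mem]
  · rw [vv2_eq_of_ne a hij]
    have hu : ∀ k, ∑ m, F2 n k m ∈ skewV2 n := fun k =>
      Submodule.sum_mem _ fun m _ => F2_mem_skewV2 k m
    exact add_mem (sub_mem (F2_mem_skewV2 i j) (Submodule.smul_mem _ _ (hu i)))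
      (Submodule.smul_mem _ _ (hu j))

theorem vv2_apply_of_ne {i j : Fin n} (hij : i ≠ j) (p q : Fin n) :
    vv2 a i j p q = F2 n i j p q
      - a j / (∑ m, a m) * ((if p = i then 1 else 0) - (if q = i then 1 else 0))
      + a i / (∑ m, a m) * ((if p = j then 1 else 0) - (if q = j then 1 else 0)) := by
  simp only [vv2_eq_of_ne a hij, Pi.add_apply, Pi.sub_apply, Pi.smul_apply, smul_eq_mul,
    sum_F2_apply]

theorem sum_mul_vv2_apply (hA : ∑ m, a m ≠ 0) (i j k : Fin n) :
    ∑ m, a m * vv2 a i j k m = 0 := by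
  by_cases hij : i = j
  · simp [vv2, hij]
  simp only [vv2_apply_of_ne a hij, mul_add, mul_sub, Finset.sum_add_distrib,
    Finset.sum_sub_distrib, sum_mul_F2_apply]
  simp only [← Finset.sum_mul]
  simp only [mul_ite, mul_one, mul_zero, Finset.sum_ite_eq', Finset.mem_univ, if_true]
  split_ifs <;> field_simp <;> ring

noncomputable def S2Form : LinearMap.BilinForm ℂ (Fin n → Fin n → ℂ) :=
  LinearMap.mk₂ ℂ (S2 a)
    (fun x y z => by simp only [S2, Pi.add_apply, mul_add, add_mul, Finset.sum_add_distrib])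
    (fun c x y => by
      simp only [S2, Pi.smul_apply, smul_eq_mul, Finset.mul_sum]
      exact Finset.sum_congr rfl fun _ _ => Finset.sum_congr rfl fun _ _ => by ring)
    (fun x y z => by simp only [S2, Pi.add_apply, mul_add, Finset.sum_add_distrib])
    (fun c x y => by
      simp only [S2, Pi.smul_apply, smul_eq_mul, Finset.mul_sum]
      exact Finset.sum_congr rfl fun _ _ => Finset.sum_congr rfl fun _ _ => by ring)

theorem S2Form_apply (x y : Fin n → Fin n → ℂ) : S2Form a x y = S2 a x y := rfl

theorem S2_F2_right {x : Fin n → Fin n → ℂ} (hx : x ∈ skewV2 n) (k l : Fin n) :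
    S2 a x (F2 n k l) = a k * a l * x k l := by
  simp only [S2, F2, mul_sub, mul_ite, mul_one, mul_zero, Finset.sum_sub_distrib, ite_and,
    Finset.sum_ite_irrel, Finset.sum_ite_eq', Finset.mem_filter, Finset.mem_univ, true_and,
    Finset.sum_const_zero, ite_true]
  have hskew : x l k = -x k l := hx k l
  rcases lt_trichotomy k l with h | rfl | h
  · rw [if_pos h, if_neg h.not_gt, sub_zero]
  · simp [show x k k = 0 by linear_combination hx k k / 2]
  · rw [if_neg h.not_gt, if_pos h, hskew]
    ring

theorem S2_sum_F2_right {x : Fin n → Fin n → ℂ} (hx : x ∈ skewV2 n) (k : Fin n) :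
    S2 a x (∑ m, F2 n k m) = a k * ∑ m, a m * x k m := by
  rw [← S2Form_apply, map_sum, Finset.mul_sum]
  exact Finset.sum_congr rfl fun m _ => by rw [S2Form_apply, S2_F2_right a hx]; ring

theorem S2_vv2_sum_F2 (hA : ∑ m, a m ≠ 0) (i j k : Fin n) :
    S2 a (vv2 a i j) (∑ m, F2 n k m) = 0 := by
  rw [S2_sum_F2_right a (vv2_mem_skewV2 a i j), sum_mul_vv2_apply a hA, mul_zero]

theorem S2_vv2_vv2 (hA : ∑ m, a m ≠ 0) (i j k l : Fin n) :
    S2 a (vv2 a i j) (vv2 a k l) = a k * a l * vv2 a i j k l := by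
  by_cases hkl : k = l
  · subst hkl
    have hdiag : vv2 a i j k k = 0 := by linear_combination vv2_mem_skewV2 a i j k k / 2
    rw [hdiag, mul_zero, vv2_self]
    simp [S2]
  rw [vv2_eq_of_ne a hkl, ← S2Form_apply, map_add, map_sub, map_smul, map_smul]
  simp only [S2Form_apply, S2_vv2_sum_F2 a hA, smul_zero, sub_zero, add_zero,
    S2_F2_right a (vv2_mem_skewV2 a i j)]

end ContravariantForm

theorem stmt_10_general (n : ℕ) (a : Fin n → ℂ) (hA : (∑ j, a j) ≠ 0) :
    (∀ i j k l : Fin n, i ≠ j → i ≠ k → i ≠ l → j ≠ k → j ≠ l → k ≠ l →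
      S2 a (vv2 a i j) (vv2 a k l) = 0) ∧
    (∀ i j k : Fin n, i ≠ j → i ≠ k → j ≠ k →
      S2 a (vv2 a i j) (vv2 a i k) = -(a i * a j * a k) / (∑ m, a m)) ∧
    (∀ i j : Fin n, i ≠ j →
      S2 a (vv2 a i j) (vv2 a i j) = a i * a j - a i * a j * (a i + a j) / (∑ m, a m) ∧
      S2 a (vv2 a i j) (vv2 a i j) =
        -∑ k ∈ Finset.univ.erase j, S2 a (vv2 a i j) (vv2 a i k)) := by
  have hS := S2_vv2_vv2 a hA
  refine ⟨fun i j k l hij hik hil hjk hjl _ => ?_, fun i j k hij hik hjk => ?_,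
    fun i j hij => ⟨?_, ?_⟩⟩
  · simp [hS, vv2_apply_of_ne a hij, F2, hik.symm, hil.symm, hjk.symm, hjl.symm]
  · simp only [hS, vv2_apply_of_ne a hij, F2, hjk.symm, and_false, ↓reduceIte, hij, hik.symm,
      and_self, sub_self, sub_zero, mul_one, zero_sub, mul_zero, add_zero, mul_neg]
    ring
  · simp only [hS, vv2_apply_of_ne a hij, F2, and_self, ↓reduceIte, hij, hij.symm, sub_zero,
      mul_one, zero_sub, mul_neg]
    ring
  · rw [eq_neg_iff_add_eq_zero, add_comm, Finset.sum_erase_add _ _ (Finset.mem_univ j)]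
    simp only [hS, mul_assoc, ← Finset.mul_sum, sum_mul_vv2_apply a hA, mul_zero]

/-- Values of the contravariant form on the vectors `v_{i,j}`. -/
theorem stmt_10 (n : ℕ) (hn : 3 ≤ n) (b : Fin n → Fin 2 → ℂ)
    (hd : ∀ i j : Fin n, i ≠ j → dd2 b i j ≠ 0)
    (a : Fin n → ℂ) (ha : ∀ j, a j ≠ 0) (hA : (∑ j, a j) ≠ 0) :
    (∀ i j k l : Fin n, i ≠ j → i ≠ k → i ≠ l → j ≠ k → j ≠ l → k ≠ l →
      S2 a (vv2 a i j) (vv2 a k l) = 0) ∧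
    (∀ i j k : Fin n, i ≠ j → i ≠ k → j ≠ k →
      S2 a (vv2 a i j) (vv2 a i k) = -(a i * a j * a k) / (∑ m, a m)) ∧
    (∀ i j : Fin n, i ≠ j →
      S2 a (vv2 a i j) (vv2 a i j) = a i * a j - a i * a j * (a i + a j) / (∑ m, a m) ∧
      S2 a (vv2 a i j) (vv2 a i j) =
        -∑ k ∈ Finset.univ.erase j, S2 a (vv2 a i j) (vv2 a i k)) :=
  stmt_10_general n a hA
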